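/- The Jacobian of the RFM with pool evaluated at an interior equilibrium γ(s) has rank exactly n (i.e., its kernel is one-dimensional); in particular 0 is an eigenvalue of geometric multiplicity 1. -/

import Mathlib

open scoped Matrix

/-- The ribosome flow model with pool: vector field on `ℝ^{n+1}`. -/
def rfm (n : ℕ) (l lc : ℝ) (x : Fin (n + 1) → ℝ) : Fin (n + 1) → ℝ :=
  fun i =>
    let g : ℕ → ℝ := fun k => if h : k < n + 1 then x ⟨k, h⟩ else 0
    if i.val = 0 then -l * g 0 * (1 - g 1) + lc * g n
    else if i.val = 1 then l * g 0 * (1 - g 1) - lc * g 1 * (1 - g 2)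
    else if i.val = n then lc * g (n - 1) * (1 - g n) - lc * g n
    else lc * g (i.val - 1) * (1 - g i.val) - lc * g i.val * (1 - g (i.val + 1))

/-- The Jacobian matrix of the RFM-with-pool vector field. -/
noncomputable def rfmJac (n : ℕ) (l lc : ℝ) (p : Fin (n + 1) → ℝ) :
    Matrix (Fin (n + 1)) (Fin (n + 1)) ℝ :=
  Matrix.of fun k i => fderiv ℝ (fun x => rfm n l lc x k) p (Pi.single i 1)

/-!
The RFM with pool is a closed ring of `n + 1` compartments (the pool is site `0`): writing
`ψ i` for the flux out of site `i`, `f i = ψ (i - 1) - ψ i` with indices mod `n + 1`. Hence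
the coordinates of every vector in the image of the Jacobian sum to zero: its rank is at most `n`.
Conversely, `J z = 0` says that the linearised flux is the same across every edge of the ring;
across the last edge, from site `n` into the pool, it is `lc * z n`. So if also `z n = 0`, every
linearised flux vanishes, and since `γ i ≠ 1` for `i ≥ 1` back-substitution from site `n` down to
the pool gives `z = 0`. The kernel is therefore at most one-dimensional.
-/

theorem Matrix.of_fderiv_mulVec {𝕜 ι κ : Type*} [NontriviallyNormedField 𝕜] [Fintype ι]
    [DecidableEq ι] (F : (ι → 𝕜) → κ → 𝕜) (p z : ι → 𝕜) :
    (Matrix.of fun k i => fderiv 𝕜 (fun x => F x k) p (Pi.single i 1)) *ᵥ z =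
      fun k => fderiv 𝕜 (fun x => F x k) p z := by
  have h : (Matrix.of fun k i => fderiv 𝕜 (fun x => F x k) p (Pi.single i 1)) =
      LinearMap.toMatrix'
        (ContinuousLinearMap.pi fun k => fderiv 𝕜 (fun x => F x k) p).toLinearMap := by
    ext; rfl
  rw [h, LinearMap.toMatrix'_mulVec]
  rfl

theorem Matrix.rank_lt_card_of_sum_mulVec_eq_zero {K m n : Type*} [Field K] [Fintype m]
    [Fintype n] [Nonempty m] (A : Matrix m n K)
    (h : ∀ v, ∑ i, (A *ᵥ v) i = 0) : A.rank < Fintype.card m := by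
  classical
  rw [← Module.finrank_fintype_fun_eq_card K]
  refine Submodule.finrank_lt fun htop => ?_
  obtain ⟨i⟩ := ‹Nonempty m›
  obtain ⟨v, hv⟩ : Pi.single i 1 ∈ LinearMap.range A.mulVecLin := htop ▸ Submodule.mem_top
  have hsum := h v
  rw [← Matrix.mulVecLin_apply, hv] at hsum
  simp at hsum

theorem Matrix.card_le_rank_add_one_of_mulVec_eq_zero {K m n : Type*} [Field K] [Fintype n]
    (A : Matrix m n K) (j : n) (h : ∀ v, A *ᵥ v = 0 → v j = 0 → v = 0) :
    Fintype.card n ≤ A.rank + 1 := by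
  have hinj : Function.Injective ((LinearMap.proj j).comp (LinearMap.ker A.mulVecLin).subtype) :=
    (injective_iff_map_eq_zero _).2 fun v hv => Subtype.ext (h v v.2 hv)
  have hker := LinearMap.finrank_le_finrank_of_injective hinj
  have hrank := LinearMap.finrank_range_add_finrank_ker A.mulVecLin
  rw [Module.finrank_self] at hker
  rw [Module.finrank_fintype_fun_eq_card] at hrank
  unfold Matrix.rank
  omega

theorem Finset.sum_comp_sub_sub_eq_zero {G M : Type*} [AddGroup G] [Fintype G]
    [AddCommGroup M] (ψ : G → M) (g : G) : ∑ i, (ψ (i - g) - ψ i) = 0 := by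
  rw [Finset.sum_sub_distrib, sub_eq_zero]
  exact (Equiv.subRight g).sum_comp ψ

theorem Fin.eq_last_of_forall_sub_one_eq {n : ℕ} {α : Type*} {ψ : Fin (n + 1) → α}
    (h : ∀ i, ψ (i - 1) = ψ i) (i : Fin (n + 1)) : ψ i = ψ (Fin.last n) := by
  induction i using Fin.reverseInduction with
  | last => rfl
  | cast i ih => rw [← ih, ← h i.succ, ← Fin.coeSucc_eq_succ, add_sub_cancel_right]

section RFMFlux

variable {n : ℕ} {l lc : ℝ}

noncomputable def extendedCoord (n k : ℕ) : (Fin (n + 1) → ℝ) →L[ℝ] ℝ :=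
  if h : k < n + 1 then ContinuousLinearMap.proj ⟨k, h⟩ else 0

theorem extendedCoord_apply (n k : ℕ) (x : Fin (n + 1) → ℝ) :
    extendedCoord n k x = if h : k < n + 1 then x ⟨k, h⟩ else 0 := by
  unfold extendedCoord; split_ifs <;> rfl

theorem extendedCoord_castSucc_add_one (i : Fin n) (x : Fin (n + 1) → ℝ) :
    extendedCoord n ((i.castSucc : ℕ) + 1) x = x i.succ := by
  rw [extendedCoord_apply, dif_pos (by simp)]
  rfl

@[simp] theorem extendedCoord_add_one_self (x : Fin (n + 1) → ℝ) :
    extendedCoord n (n + 1) x = 0 := by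
  simp [extendedCoord_apply]

def rfmRate (l lc : ℝ) (i : Fin (n + 1)) : ℝ := if i = 0 then l else lc

theorem rfmRate_ne_zero (hl : l ≠ 0) (hlc : lc ≠ 0) (i : Fin (n + 1)) :
    rfmRate l lc i ≠ 0 := by
  unfold rfmRate; split_ifs <;> assumption

/-- The flux out of site `i`; as `extendedCoord n (n + 1) = 0`, site `n` releases into the
pool without exclusion. -/
noncomputable def rfmFlux (n : ℕ) (l lc : ℝ) (x : Fin (n + 1) → ℝ) (i : Fin (n + 1)) : ℝ :=
  rfmRate l lc i * x i * (1 - extendedCoord n ((i : ℕ) + 1) x)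

noncomputable def rfmFluxDeriv (n : ℕ) (l lc : ℝ) (p z : Fin (n + 1) → ℝ) (i : Fin (n + 1)) :
    ℝ :=
  rfmRate l lc i *
    ((1 - extendedCoord n ((i : ℕ) + 1) p) * z i - p i * extendedCoord n ((i : ℕ) + 1) z)

theorem rfm_eq_rfmFlux_sub (hn : 1 ≤ n) (x : Fin (n + 1) → ℝ) (i : Fin (n + 1)) :
    rfm n l lc x i = rfmFlux n l lc x (i - 1) - rfmFlux n l lc x i := by
  obtain ⟨k, hk⟩ := i
  have hpred :
      (⟨k, hk⟩ - 1 : Fin (n + 1)) = ⟨if k = 0 then n else k - 1, by split_ifs <;> omega⟩ :=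
    Fin.ext (by simp [Fin.coe_sub_one, Fin.ext_iff])
  rw [hpred]
  simp only [rfm, rfmFlux, rfmRate, extendedCoord_apply, Fin.ext_iff, Fin.val_zero]
  split_ifs <;> subst_vars <;> first
    | omega
    | simp_all [Nat.sub_add_cancel hn, Nat.one_le_iff_ne_zero] <;> (try split_ifs) <;>
        first | omega | ring

theorem hasFDerivAt_rfmFlux (p : Fin (n + 1) → ℝ) (i : Fin (n + 1)) :
    HasFDerivAt (fun x => rfmFlux n l lc x i)
      (rfmRate l lc i • ((1 - extendedCoord n ((i : ℕ) + 1) p) • ContinuousLinearMap.proj i -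
        p i • extendedCoord n ((i : ℕ) + 1))) p := by
  refine (((hasFDerivAt_apply i p).const_mul (rfmRate l lc i)).mul
    ((hasFDerivAt_const 1 p).sub (extendedCoord n ((i : ℕ) + 1)).hasFDerivAt)).congr_fderiv ?_
  ext z
  simp only [zero_sub, smul_neg, Pi.sub_apply, add_apply, neg_apply,
    smul_apply, sub_apply, smul_eq_mul, ContinuousLinearMap.proj_apply]
  ring

theorem rfmJac_mulVec (hn : 1 ≤ n) (p z : Fin (n + 1) → ℝ) :
    rfmJac n l lc p *ᵥ z =
      fun i => rfmFluxDeriv n l lc p z (i - 1) - rfmFluxDeriv n l lc p z i := by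
  rw [rfmJac, Matrix.of_fderiv_mulVec]
  funext i
  simp only [rfm_eq_rfmFlux_sub hn]
  rw [((hasFDerivAt_rfmFlux p (i - 1)).fun_sub (hasFDerivAt_rfmFlux p i)).fderiv]
  simp [rfmFluxDeriv]

theorem eq_zero_of_rfmJac_mulVec_eq_zero (hn : 1 ≤ n) (hl : l ≠ 0) (hlc : lc ≠ 0)
    {p z : Fin (n + 1) → ℝ} (hp : ∀ i : Fin n, p i.succ ≠ 1) (hz : rfmJac n l lc p *ᵥ z = 0)
    (hlast : z (Fin.last n) = 0) : z = 0 := by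
  rw [rfmJac_mulVec hn] at hz
  have hflux : ∀ i, rfmFluxDeriv n l lc p z i = 0 := by
    intro i
    rw [Fin.eq_last_of_forall_sub_one_eq (fun i => sub_eq_zero.1 (congrFun hz i)) i]
    simp [rfmFluxDeriv, hlast]
  funext i
  induction i using Fin.reverseInduction with
  | last => exact hlast
  | cast i ih =>
    have hi := hflux i.castSucc
    simp only [rfmFluxDeriv, extendedCoord_castSucc_add_one, ih] at hi
    simpa [rfmRate_ne_zero hl hlc, sub_eq_zero, Ne.symm (hp i)] using hi

end RFMFlux

theorem jacobian_rank_general (n : ℕ) (hn : 2 ≤ n) (l lc : ℝ)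
    (hl : 0 < l) (hlc : 0 < lc)
    (γ : ℕ → ℝ)
    (hmem : ∀ i, 1 ≤ i → i ≤ n → γ i ∈ Set.Ioo (0 : ℝ) 1) :
    (rfmJac n l lc (fun i => γ i.val)).rank = n := by
  have hn1 : 1 ≤ n := by omega
  set J := rfmJac n l lc fun i => γ i.val
  have hupper : J.rank < n + 1 := by
    simpa using J.rank_lt_card_of_sum_mulVec_eq_zero fun z => by
      rw [rfmJac_mulVec hn1]
      exact Finset.sum_comp_sub_sub_eq_zero _ 1
  have hlower : n + 1 ≤ J.rank + 1 := by
    simpa using J.card_le_rank_add_one_of_mulVec_eq_zero (Fin.last n) fun z hz hlast =>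
      eq_zero_of_rfmJac_mulVec_eq_zero hn1 hl.ne' hlc.ne'
        (fun i => (hmem (i + 1) (by omega) i.isLt).2.ne) hz hlast
  omega

/-- The Jacobian of the RFM with pool at an interior equilibrium `γ(s)`
(given by the continued-fraction recursion) has rank exactly `n`; in
particular `0` is an eigenvalue of geometric multiplicity one. -/
theorem jacobian_rank (n : ℕ) (hn : 2 ≤ n) (l lc : ℝ)
    (hl : 0 < l) (hlc : 0 < lc) (s : ℝ) (hs : 0 < s)
    (γ : ℕ → ℝ)
    (hγ0pos : 0 < γ 0)
    (hmem : ∀ i, 1 ≤ i → i ≤ n → γ i ∈ Set.Ioo (0 : ℝ) 1)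
    (hγn : γ n = s)
    (hrec : ∀ i, 1 ≤ i → i ≤ n - 1 → γ i = s / (1 - γ (i + 1)))
    (hγ0 : γ 0 = lc * s / (l * (1 - γ 1))) :
    (rfmJac n l lc (fun i => γ i.val)).rank = n :=
  jacobian_rank_general n hn l lc hl hlc γ hmem
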